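/- arXiv:2505.17126 — 3 statements merged into one kernel-verified Lean document; each statement's English description precedes it below -/
import Mathlib

section
/- Let Z_1, ..., Z_{n+1} be exchangeable real-valued random variables that are almost surely distinct. Let q̂ be the ⌈(1−α)(n+1)⌉-th smallest value among Z_1, ..., Z_n. Then 1 − α ≤ P(Z_{n+1} ≤ q̂) ≤ 1 − α + 1/(n+1). -/
open MeasureTheory ENNReal

/-- The `k`-th smallest element (1-indexed) of a list of reals. -/
noncomputable def kthSmallest (l : List ℝ) (k : ℕ) : ℝ :=
  (l.mergeSort (· ≤ ·)).getD (k - 1) 0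

lemma sorted_helper (s : List ℝ) (hs : List.Pairwise (· ≤ ·) s) (k : ℕ) (hk1 : 1 ≤ k)
    (hkl : k ≤ s.length) (x : ℝ) :
    x ≤ s.getD (k - 1) 0 ↔ s.countP (fun y => decide (y < x)) < k := by
  have hidx : k - 1 < s.length := by omega
  rw [List.getD_eq_getElem s 0 hidx]
  constructor
  · intro h
    have hsplit : s = s.take (k-1) ++ s.drop (k-1) := (List.take_append_drop _ _).symm
    have hdrop : (s.drop (k-1)).countP (fun y => decide (y < x)) = 0 := by
      rw [List.countP_eq_zero]
      intro a ha
      obtain ⟨m, hm⟩ := List.get_of_mem ha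
      have hlen : k - 1 + m.1 < s.length := by
        have := m.2; simp [List.length_drop] at this; omega
      have : a = s[k - 1 + m.1] := by
        rw [← hm]; simp [List.getElem_drop]
      subst this
      have hle : s[k-1] ≤ s[k - 1 + m.1] := by
        rcases Nat.eq_or_lt_of_le (Nat.le_add_right (k-1) m.1) with he | hl
        · simp [← he]
        · exact List.Pairwise.rel_get_of_lt hs (a := ⟨k-1, hidx⟩) (b := ⟨k-1+m.1, hlen⟩) hl
      simp only [decide_eq_true_eq]
      push_neg
      exact le_trans h hle
    calc s.countP (fun y => decide (y < x))
        = (s.take (k-1)).countP _ + (s.drop (k-1)).countP _ := by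
          conv_lhs => rw [hsplit]
          rw [List.countP_append]
      _ ≤ (k-1) + 0 := by
          rw [hdrop]
          exact Nat.add_le_add (((List.length_take (i := k-1) (l := s)) ▸ (List.countP_le_length (p := fun y => decide (y < x)) (l := s.take (k-1)))).trans
            (by omega)) le_rfl
      _ < k := by omega
  · intro h
    by_contra hx
    push_neg at hx
    have htake : (s.take k).countP (fun y => decide (y < x)) = k := by
      rw [List.countP_eq_length.2, List.length_take]
      · omega
      · intro a ha
        obtain ⟨m, hm⟩ := List.get_of_mem ha
        have hmk : m.1 < k := by have := m.2; simp [List.length_take] at this; omega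
        have hml : m.1 < s.length := by omega
        have : a = s[m.1] := by rw [← hm]; simp [List.getElem_take]
        subst this
        have : s[m.1] ≤ s[k-1] := by
          rcases Nat.eq_or_lt_of_le (by omega : m.1 ≤ k - 1) with he | hl
          · simp [he]
          · exact List.Pairwise.rel_get_of_lt hs (a := ⟨m.1, hml⟩) (b := ⟨k-1, hidx⟩) hl
        simp only [decide_eq_true_eq]
        exact lt_of_le_of_lt this hx
    have : k ≤ s.countP (fun y => decide (y < x)) := by
      conv_rhs => rw [← List.take_append_drop k s, List.countP_append]
      omega
    omega

lemma le_kthSmallest_iff (l : List ℝ) (k : ℕ) (hk1 : 1 ≤ k) (hkl : k ≤ l.length) (x : ℝ) :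
    x ≤ kthSmallest l k ↔ l.countP (fun y => decide (y < x)) < k := by
  have hsorted : List.Pairwise (· ≤ ·) (l.mergeSort (· ≤ ·)) := by
    have := List.pairwise_mergeSort (le := fun a b : ℝ => decide (a ≤ b))
      (fun a b c hab hbc => by simp_all; linarith)
      (fun a b => by simp [le_total]) l
    refine this.imp ?_
    intro a b h; simpa using h
  have hperm := List.mergeSort_perm l (fun a b : ℝ => decide (a ≤ b))
  rw [kthSmallest, sorted_helper _ hsorted k hk1 (by rwa [List.length_mergeSort]) x,
    hperm.countP_eq]

lemma countP_ofFn {n : ℕ} (f : Fin n → ℝ) (p : ℝ → Bool) :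
    (List.ofFn f).countP p = (Finset.univ.filter fun i => p (f i)).card := by
  rw [Finset.card_filter]
  induction n with
  | zero => simp
  | succ m ih =>
    rw [List.ofFn_succ, List.countP_cons, Fin.sum_univ_succ, ih (fun i => f i.succ)]
    omega

lemma filter_card_perm {n : ℕ} (e : Equiv.Perm (Fin n)) (P : Fin n → Prop) [DecidablePred P] :
    (Finset.univ.filter fun i => P (e i)).card = (Finset.univ.filter P).card := by
  apply Finset.card_bij (fun i _ => e i)
  · intro a ha; simp_all
  · intro a ha b hb h; exact e.injective h
  · intro b hb; exact ⟨e.symm b, by simp_all, by simp⟩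

/-- Split conformal coverage guarantee: for exchangeable, a.s.-distinct real random variables
`Z_1, ..., Z_{n+1}`, with `q̂` the `⌈(1−α)(n+1)⌉`-th smallest of `Z_1, ..., Z_n`,
`1 − α ≤ P(Z_{n+1} ≤ q̂) ≤ 1 − α + 1/(n+1)`. -/
theorem stmt_4 {Ω : Type*} [MeasurableSpace Ω] (μ : Measure Ω) [IsProbabilityMeasure μ]
    (n : ℕ) (Z : Fin (n + 1) → Ω → ℝ)
    (hmeas : ∀ i, Measurable (Z i))
    (hexch : ∀ e : Equiv.Perm (Fin (n + 1)),
      Measure.map (fun ω => fun i => Z (e i) ω) μ = Measure.map (fun ω => fun i => Z i ω) μ)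
    (hdistinct : ∀ i j, i ≠ j → μ {ω | Z i ω = Z j ω} = 0)
    (α : ℝ) (hα0 : 0 < α) (hα1 : α < 1)
    (hk : ⌈(1 - α) * (n + 1)⌉₊ ≤ n) :
    1 - α ≤ (μ {ω | Z (Fin.last n) ω ≤
        kthSmallest (List.ofFn fun i : Fin n => Z i.castSucc ω) ⌈(1 - α) * (n + 1)⌉₊}).toReal ∧
    (μ {ω | Z (Fin.last n) ω ≤
        kthSmallest (List.ofFn fun i : Fin n => Z i.castSucc ω) ⌈(1 - α) * (n + 1)⌉₊}).toReal ≤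
      1 - α + 1 / (n + 1) := by
  classical
  set k := ⌈(1 - α) * (n + 1)⌉₊ with hkdef
  have hx0 : (0:ℝ) < (1 - α) * (n + 1) := by
    apply _root_.mul_pos (by linarith) (by positivity)
  have hk1 : 1 ≤ k := Nat.one_le_iff_ne_zero.2 (by
    intro h; rw [hkdef] at h; have := Nat.ceil_pos.2 hx0; omega)
  -- the rank count
  set N : Fin (n+1) → Ω → ℕ :=
    fun j ω => (Finset.univ.filter fun i => Z i ω < Z j ω).card with hN
  have hNmeas : ∀ j, Measurable (N j) := by
    intro j
    simp only [hN, Finset.card_filter]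
    apply Finset.measurable_sum
    intro i _
    exact Measurable.ite (measurableSet_lt (hmeas i) (hmeas j)) measurable_const measurable_const
  -- set equality: coverage event = low-rank event
  have hcard : ∀ ω, (Finset.univ.filter
      fun i : Fin n => Z i.castSucc ω < Z (Fin.last n) ω).card = N (Fin.last n) ω := by
    intro ω
    apply Finset.card_bij (fun i _ => Fin.castSucc i)
    · intro a ha; simp_all
    · intro a _ b _ h; exact Fin.castSucc_injective n h
    · intro b hb
      simp only [Finset.mem_filter, Finset.mem_univ, true_and] at hb
      have hne : b ≠ Fin.last n := by rintro rfl; exact lt_irrefl _ hb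
      obtain ⟨j, rfl⟩ := Fin.exists_castSucc_eq.2 hne
      exact ⟨j, by simp [hb], rfl⟩
  have hset : {ω | Z (Fin.last n) ω ≤
      kthSmallest (List.ofFn fun i : Fin n => Z i.castSucc ω) k}
      = {ω | N (Fin.last n) ω < k} := by
    ext ω
    simp only [Set.mem_setOf_eq]
    rw [le_kthSmallest_iff _ _ hk1 (by rw [List.length_ofFn]; exact hk) _, countP_ofFn]
    simp only [decide_eq_true_eq]
    rw [hcard ω]
  -- exchangeability: equal distribution of ranks
  have hmapmeas : ∀ e : Equiv.Perm (Fin (n+1)), Measurable (fun ω => fun i => Z (e i) ω) :=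
    fun e => measurable_pi_lambda _ (fun i => hmeas (e i))
  have hSmeas : ∀ r : ℕ, MeasurableSet
      {v : Fin (n+1) → ℝ | (Finset.univ.filter fun i => v i < v (Fin.last n)).card = r} := by
    intro r
    have : Measurable (fun v : Fin (n+1) → ℝ =>
        (Finset.univ.filter fun i => v i < v (Fin.last n)).card) := by
      simp only [Finset.card_filter]
      apply Finset.measurable_sum
      intro i _
      exact Measurable.ite (measurableSet_lt (measurable_pi_apply i)
        (measurable_pi_apply (Fin.last n))) measurable_const measurable_const
    exact this (measurableSet_singleton r)
  have hNeq : ∀ (j : Fin (n+1)) (r : ℕ),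
      μ {ω | N j ω = r} = μ {ω | N (Fin.last n) ω = r} := by
    intro j r
    have h := hexch (Equiv.swap j (Fin.last n))
    have h2 : Measure.map (fun ω => fun i => Z ((Equiv.swap j (Fin.last n)) i) ω) μ
          {v : Fin (n+1) → ℝ | (Finset.univ.filter fun i => v i < v (Fin.last n)).card = r}
        = Measure.map (fun ω => fun i => Z i ω) μ
          {v : Fin (n+1) → ℝ | (Finset.univ.filter fun i => v i < v (Fin.last n)).card = r} := by
      rw [h]
    rw [Measure.map_apply (hmapmeas (Equiv.swap j (Fin.last n))) (hSmeas r),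
      Measure.map_apply (measurable_pi_lambda _ hmeas) (hSmeas r)] at h2
    have hL : (fun ω => fun i => Z ((Equiv.swap j (Fin.last n)) i) ω) ⁻¹'
        {v : Fin (n+1) → ℝ | (Finset.univ.filter fun i => v i < v (Fin.last n)).card = r}
        = {ω | N j ω = r} := by
      ext ω
      simp only [Set.mem_preimage, Set.mem_setOf_eq, hN]
      simp only [Equiv.swap_apply_right]
      rw [filter_card_perm (Equiv.swap j (Fin.last n)) (fun i => Z i ω < Z j ω)]
    have hR : (fun ω => fun i => Z i ω) ⁻¹'
        {v : Fin (n+1) → ℝ | (Finset.univ.filter fun i => v i < v (Fin.last n)).card = r}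
        = {ω | N (Fin.last n) ω = r} := rfl
    rw [hL, hR] at h2
    exact h2
  -- the distinctness event
  set D : Set Ω := {ω | ∀ i j : Fin (n+1), i ≠ j → Z i ω ≠ Z j ω} with hDdef
  have hD : μ Dᶜ = 0 := by
    have hsub : Dᶜ ⊆ ⋃ (i) (j) (_ : i ≠ j), {ω | Z i ω = Z j ω} := by
      intro ω hω
      simp only [hDdef, Set.mem_compl_iff, Set.mem_setOf_eq] at hω
      push_neg at hω
      obtain ⟨i, j, hij, h⟩ := hω
      exact Set.mem_iUnion.2 ⟨i, Set.mem_iUnion.2 ⟨j, Set.mem_iUnion.2 ⟨hij, h⟩⟩⟩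
    exact measure_mono_null hsub (measure_iUnion_null fun i => measure_iUnion_null fun j =>
      measure_iUnion_null fun hij => hdistinct i j hij)
  have hDmeas : MeasurableSet D := by
    have : D = ⋂ (i) (j) (_ : i ≠ j), {ω | Z i ω = Z j ω}ᶜ := by
      ext ω
      simp only [hDdef, Set.mem_setOf_eq, Set.mem_iInter, Set.mem_compl_iff]
    rw [this]
    exact MeasurableSet.iInter fun i => MeasurableSet.iInter fun j =>
      MeasurableSet.iInter fun _ => (measurableSet_eq_fun (hmeas i) (hmeas j)).compl
  -- on D, ranks are bijective
  have hNlt : ∀ (j : Fin (n+1)) ω, N j ω < n + 1 := by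
    intro j ω
    have hsub : (Finset.univ.filter fun i => Z i ω < Z j ω) ⊆ Finset.univ.erase j := by
      intro i hi
      simp only [Finset.mem_filter, Finset.mem_univ, true_and] at hi
      refine Finset.mem_erase.2 ⟨?_, Finset.mem_univ i⟩
      rintro rfl; exact lt_irrefl _ hi
    have := Finset.card_le_card hsub
    rw [Finset.card_erase_of_mem (Finset.mem_univ j), Finset.card_univ, Fintype.card_fin] at this
    simp only [hN]
    omega
  have hmono : ∀ ω (j j' : Fin (n+1)), Z j ω < Z j' ω → N j ω < N j' ω := by
    intro ω j j' hz
    apply Finset.card_lt_card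
    rw [Finset.ssubset_iff_of_subset]
    · exact ⟨j, by simp [hz], by simp⟩
    · intro i hi
      simp only [Finset.mem_filter, Finset.mem_univ, true_and] at hi ⊢
      exact lt_trans hi hz
  have hbij : ∀ ω ∈ D, Function.Bijective
      (fun j : Fin (n+1) => (⟨N j ω, hNlt j ω⟩ : Fin (n+1))) := by
    intro ω hω
    rw [← Finite.injective_iff_bijective]
    intro j j' h
    by_contra hne
    have hzne : Z j ω ≠ Z j' ω := hω j j' hne
    have hNe : N j ω = N j' ω := congrArg Fin.val h
    rcases lt_or_gt_of_ne hzne with hlt | hgt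
    · exact absurd hNe (Nat.ne_of_lt (hmono ω j j' hlt))
    · exact absurd hNe.symm (Nat.ne_of_lt (hmono ω j' j hgt))
  -- uniform rank distribution
  have hval : ∀ r : ℕ, r < n + 1 →
      μ {ω | N (Fin.last n) ω = r} = ((n+1 : ℕ) : ℝ≥0∞)⁻¹ := by
    intro r hr
    have hDone : μ D = 1 := by
      have := measure_inter_conull (μ := μ) (s := Set.univ) (t := D) hD
      simpa using this
    have hcover : (⋃ j : Fin (n+1), ({ω | N j ω = r} ∩ D)) = D := by
      ext ω
      simp only [Set.mem_iUnion, Set.mem_inter_iff, Set.mem_setOf_eq]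
      constructor
      · rintro ⟨j, _, hω⟩; exact hω
      · intro hω
        obtain ⟨j, hj⟩ := (hbij ω hω).2 ⟨r, hr⟩
        exact ⟨j, congrArg Fin.val hj, hω⟩
    have hdisj : Pairwise (Function.onFun Disjoint
        fun j : Fin (n+1) => ({ω | N j ω = r} ∩ D)) := by
      intro j j' hne
      rw [Function.onFun, Set.disjoint_left]
      rintro ω ⟨hj, hω⟩ ⟨hj', _⟩
      apply hne
      apply (hbij ω hω).1
      apply Fin.ext
      simp only [Set.mem_setOf_eq] at hj hj'
      simp [hj, hj']
    have hmeas' : ∀ j : Fin (n+1), MeasurableSet ({ω | N j ω = r} ∩ D) :=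
      fun j => ((hNmeas j) (measurableSet_singleton r)).inter hDmeas
    have hsum : ∑ j : Fin (n+1), μ ({ω | N j ω = r} ∩ D) = 1 := by
      rw [← tsum_fintype (L := SummationFilter.unconditional _), ← measure_iUnion hdisj hmeas', hcover, hDone]
    have h2 : ∀ j : Fin (n+1), μ ({ω | N j ω = r} ∩ D) = μ {ω | N (Fin.last n) ω = r} := by
      intro j
      rw [measure_inter_conull hD, hNeq j r]
    rw [Finset.sum_congr rfl (fun j _ => h2 j), Finset.sum_const, Finset.card_univ,
      Fintype.card_fin, nsmul_eq_mul] at hsum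
    calc μ {ω | N (Fin.last n) ω = r}
        = ((n+1 : ℕ) : ℝ≥0∞)⁻¹ * (((n+1 : ℕ) : ℝ≥0∞) * μ {ω | N (Fin.last n) ω = r}) := by
          rw [← mul_assoc, ENNReal.inv_mul_cancel (by simp) (by simp), one_mul]
      _ = ((n+1 : ℕ) : ℝ≥0∞)⁻¹ := by
          rw [show (((n+1 : ℕ) : ℝ≥0∞)) = ((n : ℝ≥0∞) + 1) by push_cast; ring] at *
          rw [hsum, mul_one]
  -- measure of the low-rank event
  have hmeaslt : μ {ω | N (Fin.last n) ω < k} = (k : ℝ≥0∞) * ((n+1 : ℕ) : ℝ≥0∞)⁻¹ := by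
    have hunion : {ω | N (Fin.last n) ω < k}
        = ⋃ r ∈ Finset.range k, {ω | N (Fin.last n) ω = r} := by
      ext ω
      simp only [Set.mem_setOf_eq, Set.mem_iUnion, Finset.mem_range]
      exact ⟨fun h => ⟨N (Fin.last n) ω, h, rfl⟩, fun ⟨r, hr, h⟩ => h ▸ hr⟩
    have hdisj : Set.PairwiseDisjoint (↑(Finset.range k) : Set ℕ)
        (fun r => {ω | N (Fin.last n) ω = r}) := by
      intro r _ r' _ hne
      rw [Function.onFun, Set.disjoint_left]
      rintro ω hj hj'
      simp only [Set.mem_setOf_eq] at hj hj'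
      exact hne (hj ▸ hj')
    rw [hunion, measure_biUnion_finset hdisj
      (fun r _ => (hNmeas _) (measurableSet_singleton r))]
    rw [Finset.sum_congr rfl (fun r hr => hval r (by
      have := Finset.mem_range.1 hr; omega)), Finset.sum_const, Finset.card_range,
      nsmul_eq_mul]
  -- finish
  rw [hset, hmeaslt]
  have htoReal : ((k : ℝ≥0∞) * ((n+1 : ℕ) : ℝ≥0∞)⁻¹).toReal = (k : ℝ) / (n + 1) := by
    rw [ENNReal.toReal_mul, ENNReal.toReal_inv, ENNReal.toReal_natCast,
      ENNReal.toReal_natCast, div_eq_mul_inv]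
    push_cast
    ring
  rw [htoReal]
  have hle1 : (1 - α) * (n + 1) ≤ (k : ℝ) := Nat.le_ceil _
  have hle2 : (k : ℝ) < (1 - α) * (n + 1) + 1 := Nat.ceil_lt_add_one hx0.le
  have hpos : (0:ℝ) < (n : ℝ) + 1 := by positivity
  constructor
  · rw [le_div_iff₀ hpos]; linarith
  · rw [div_le_iff₀ hpos]
    have h1 : (1 / ((n:ℝ) + 1)) * ((n:ℝ) + 1) = 1 := by field_simp
    nlinarith [hle2]
end

section
/- Suppose the non-conformity score r of an output is defined as the supremum of thresholds τ_r such that every generated subgraph with threshold at most τ_r is coherently factual. If r ≥ t for some t ∈ ℝ, then the subgraph selected as the one with maximal threshold strictly below t is coherently factual. -/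
/-- Non-conformity score of a finite collection of subgraph–threshold pairs:
the supremum (in `EReal`, so `⊤` when all subgraphs are coherently factual) of thresholds
`τ_r` such that every subgraph with threshold at most `τ_r` is coherently factual. -/
noncomputable def nonConformity {U : Type*} (𝒰 : Finset (U × ℝ)) (coh : U → Prop) : EReal :=
  sSup {x : EReal | (∃ τr : ℝ, x = (τr : EReal) ∧
    ∀ p ∈ 𝒰, p.2 ≤ τr → coh p.1) ∨ (x = ⊤ ∧ ∀ p ∈ 𝒰, coh p.1)}

theorem coh_of_lt_nonConformity {U : Type*} {𝒰 : Finset (U × ℝ)} {coh : U → Prop}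
    {p : U × ℝ} (hp : p ∈ 𝒰) (hlt : (p.2 : EReal) < nonConformity 𝒰 coh) : coh p.1 := by
  obtain ⟨x, hx, hpx⟩ := lt_sSup_iff.mp hlt
  rcases hx with ⟨τr, rfl, hτr⟩ | ⟨rfl, hall⟩
  · exact hτr p hp (EReal.coe_lt_coe_iff.mp hpx).le
  · exact hall p hp

theorem stmt_7_general {U : Type*} (𝒰 : Finset (U × ℝ)) (coh : U → Prop)
    (t : ℝ) (hr : (t : EReal) ≤ nonConformity 𝒰 coh)
    (pstar : U × ℝ) (hmem : pstar ∈ 𝒰) (hlt : pstar.2 < t) :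
    coh pstar.1 :=
  coh_of_lt_nonConformity hmem ((EReal.coe_lt_coe_iff.mpr hlt).trans_le hr)

/-- If the non-conformity score `r ≥ t` for some real `t`, then the subgraph selected as the
one with maximal threshold strictly below `t` is coherently factual. -/
theorem stmt_7 {U : Type*} (𝒰 : Finset (U × ℝ)) (coh : U → Prop)
    (hdistinct : ∀ p ∈ 𝒰, ∀ q ∈ 𝒰, p.2 = q.2 → p = q)
    (t : ℝ) (hr : (t : EReal) ≤ nonConformity 𝒰 coh)
    (pstar : U × ℝ) (hmem : pstar ∈ 𝒰) (hlt : pstar.2 < t)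
    (hmax : ∀ p ∈ 𝒰, p.2 < t → p.2 ≤ pstar.2) :
    coh pstar.1 :=
  stmt_7_general 𝒰 coh t hr pstar hmem hlt
end

section
/- Suppose the non-conformity score r < t and every subgraph in the collection 𝒰 is ancestor-closed in an approximate deducibility graph G, and the subgraph collection is nested (monotone in threshold). If additionally r < ∞ (some subgraph in 𝒰 is not coherently factual), then the subgraph U* selected with maximal threshold strictly below t is not coherently factual. -/
/-- An ordering of claims `L` is coherently factual w.r.t. deducibility predicate `D`
if each claim is deducible from the prefix of claims preceding it. -/
def CoherentlyFactual {V : Type*} (D : List V → V → Prop) (L : List V) : Prop :=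
  ∀ i : Fin L.length, D (L.take i) (L.get i)

/-- A vertex set is ancestor-closed if it contains all ancestors (w.r.t. edge relation `E`)
of each of its elements. -/
def AncClosed {V : Type*} (E : V → V → Prop) (S : Set V) : Prop :=
  ∀ v ∈ S, ∀ u, Relation.TransGen E u v → u ∈ S

/-- `L` is an ordering (a duplicate-free listing) of the vertex set `S`. -/
def OrderingOf {V : Type*} (S : Set V) (L : List V) : Prop :=
  L.Nodup ∧ ∀ x, x ∈ L ↔ x ∈ S

/-- `L` is a topological ordering of the subgraph induced on `S`: a listing of `S` in which
every edge of the induced subgraph goes from an earlier to a later element. -/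
def TopoOrd {V : Type*} [DecidableEq V] (E : V → V → Prop) (S : Set V) (L : List V) : Prop :=
  OrderingOf S L ∧ ∀ a b, a ∈ S → b ∈ S → E a b → L.idxOf a < L.idxOf b

/-- A subgraph (vertex set) is coherently factual if every topological ordering of it is a
coherently factual ordering of claims. -/
def CohFactSet {V : Type*} [DecidableEq V] (E : V → V → Prop) (D : List V → V → Prop)
    (S : Set V) : Prop :=
  ∀ L, TopoOrd E S L → CoherentlyFactual D L

lemma exists_topo_aux {V : Type*} [Fintype V] [DecidableEq V] (E : V → V → Prop)
    (hdag : ∀ v, ¬ Relation.TransGen E v v) (s : Finset V) :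
    ∃ L : List V, L.Nodup ∧ (∀ x, x ∈ L ↔ x ∈ s) ∧
      ∀ a b, a ∈ s → b ∈ s → E a b → L.idxOf a < L.idxOf b := by
  induction s using Finset.strongInduction with
  | _ s ih =>
  rcases s.eq_empty_or_nonempty with rfl | hne
  · exact ⟨[], by simp, by simp, by simp⟩
  · have hwf : WellFounded (Relation.TransGen E) := by
      have h1 : IsIrrefl V (Relation.TransGen E) := ⟨hdag⟩
      exact Finite.wellFounded_of_trans_of_irrefl _
    obtain ⟨m, hm, hmin⟩ := hwf.has_min ↑s (by exact_mod_cast hne)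
    simp only [Finset.mem_coe] at hm hmin
    obtain ⟨L, hnd, hmemL, hord⟩ := ih (s.erase m) (Finset.erase_ssubset hm)
    have hmL : m ∉ L := by
      intro h; have := (hmemL m).1 h; simp at this
    refine ⟨m :: L, List.nodup_cons.2 ⟨hmL, hnd⟩, ?_, ?_⟩
    · intro x
      simp only [List.mem_cons, hmemL, Finset.mem_erase]
      constructor
      · rintro (rfl | ⟨_, h⟩) <;> [exact hm; exact h]
      · intro hx
        by_cases hxm : x = m
        · exact Or.inl hxm
        · exact Or.inr ⟨hxm, hx⟩
    · intro a b ha hb hE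
      have hbm : b ≠ m := by
        rintro rfl; exact hmin a ha (Relation.TransGen.single hE)
      have hbL : b ∈ L := (hmemL b).2 (Finset.mem_erase.2 ⟨hbm, hb⟩)
      by_cases ham : a = m
      · subst ham
        rw [List.idxOf_cons_self, List.idxOf_cons_ne _ (Ne.symm hbm)]
        exact Nat.succ_pos _
      · rw [List.idxOf_cons_ne _ (Ne.symm ham), List.idxOf_cons_ne _ (Ne.symm hbm)]
        exact Nat.succ_lt_succ
          (hord a b (Finset.mem_erase.2 ⟨ham, ha⟩) (Finset.mem_erase.2 ⟨hbm, hb⟩) hE)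

lemma exists_topo {V : Type*} [Fintype V] [DecidableEq V] (E : V → V → Prop)
    (hdag : ∀ v, ¬ Relation.TransGen E v v) (S : Set V) :
    ∃ L, TopoOrd E S L := by
  obtain ⟨L, h1, h2, h3⟩ := exists_topo_aux E hdag (Set.toFinite S).toFinset
  refine ⟨L, ⟨h1, fun x => by rw [h2, Set.Finite.mem_toFinset]⟩, fun a b ha hb hE => ?_⟩
  exact h3 a b ((Set.Finite.mem_toFinset _).2 ha) ((Set.Finite.mem_toFinset _).2 hb) hE


/-- If the non-conformity score `r < t`, the collection `𝒰` is the nested, ancestor-closed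
output of the subgraph generator on an approximate deducibility graph, and `r < ∞` (some
subgraph of `𝒰` is not coherently factual), then the subgraph `U*` selected with maximal
threshold strictly below `t` is not coherently factual. -/

theorem stmt_8 {V : Type*} [Fintype V] [DecidableEq V] (E : V → V → Prop)
    (hdag : ∀ v, ¬ Relation.TransGen E v v)
    (D : List V → V → Prop)
    -- approximate-deducibility property (1)
    (hprop1 : ∀ S : Set V, AncClosed E S →
      (∃ L, OrderingOf S L ∧ CoherentlyFactual D L) →
      ∀ L, TopoOrd E S L → CoherentlyFactual D L)
    -- approximate-deducibility property (2)
    (hprop2 : ∀ S S' : Set V, AncClosed E S → S ⊆ S' →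
      ¬ (∃ L, OrderingOf S L ∧ CoherentlyFactual D L) →
      ¬ (∃ L', OrderingOf S' L' ∧ CoherentlyFactual D L'))
    -- the subgraph collection: ancestor-closed and nested (monotone in threshold)
    (𝒰 : Finset (Set V × ℝ))
    (hanc : ∀ p ∈ 𝒰, AncClosed E p.1)
    (hnested : ∀ p ∈ 𝒰, ∀ q ∈ 𝒰, p.2 ≤ q.2 → p.1 ⊆ q.1)
    -- the non-conformity score and the hypotheses `r < t` and `r < ∞`
    (r : EReal)
    (hr : r = sSup {x : EReal | (∃ τr : ℝ, x = (τr : EReal) ∧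
      ∀ p ∈ 𝒰, p.2 ≤ τr → CohFactSet E D p.1) ∨ (x = ⊤ ∧ ∀ p ∈ 𝒰, CohFactSet E D p.1)})
    (t : ℝ) (hrt : r < (t : EReal))
    (hfin : ∃ p ∈ 𝒰, ¬ CohFactSet E D p.1)
    -- the selected subgraph: maximal threshold strictly below `t`
    (pstar : Set V × ℝ) (hmem : pstar ∈ 𝒰) (hlt : pstar.2 < t)
    (hmax : ∀ p ∈ 𝒰, p.2 < t → p.2 ≤ pstar.2) :
    ¬ CohFactSet E D pstar.1 := by
  intro hcf
  obtain ⟨c, hrc, hct⟩ := exists_between hrt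
  have hcbot : c ≠ ⊥ := fun h => by rw [h] at hrc; exact not_lt_bot hrc
  have hctop : c ≠ ⊤ := fun h => by rw [h] at hct; exact (not_top_lt hct)
  lift c to ℝ using ⟨hctop, hcbot⟩ with τ
  have hτt : τ < t := by exact_mod_cast hct
  -- pstar.1 has a coherently factual ordering
  obtain ⟨Ls, hLs⟩ := exists_topo E hdag pstar.1
  have hex : ∃ L', OrderingOf pstar.1 L' ∧ CoherentlyFactual D L' :=
    ⟨Ls, hLs.1, hcf Ls hLs⟩
  have hmemset : (τ : EReal) ∈ {x : EReal | (∃ τr : ℝ, x = (τr : EReal) ∧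
      ∀ p ∈ 𝒰, p.2 ≤ τr → CohFactSet E D p.1) ∨
      (x = ⊤ ∧ ∀ p ∈ 𝒰, CohFactSet E D p.1)} := by
    left
    refine ⟨τ, rfl, fun p hp hpτ => ?_⟩
    have hsub : p.1 ⊆ pstar.1 :=
      hnested p hp pstar hmem (hmax p hp (lt_of_le_of_lt hpτ hτt))
    have hpex : ∃ L, OrderingOf p.1 L ∧ CoherentlyFactual D L := by
      by_contra hno
      exact hprop2 p.1 pstar.1 (hanc p hp) hsub hno hex
    exact hprop1 p.1 (hanc p hp) hpex
  have : (τ : EReal) ≤ r := hr ▸ le_sSup hmemset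
  exact absurd hrc (not_lt.2 this)
end
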